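/- Let f : F_q^k → F_q^l be a surjective linear map, k ≥ b ≥ 1, t ≥ 1, and let P = {p_0, …, p_{q^k−1}} ⊆ F_q^r be a code of length r (indexed by the elements u_0,…,u_{q^k−1} of F_q^k) satisfying d_b(p_i, p_j) ≥ max(2t − b + 2 − d_b(u_i, u_j), 0) whenever f(u_i) ≠ f(u_j). Then r ≥ (q^b/(q^b − 1))(2t − b + 2)(1 − q^{−l}) − k + (q^b/(q^b − 1))·(s/q^k), where s = Σ_{u ∈ ker f} w_b(u). -/

import Mathlib

open Finset

/-- The b-symbol read vector of `u`: the length-`k` vector of cyclic windows of length `b`. -/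
def piB (F : Type*) (k b : ℕ) (u : Fin k → F) : Fin k → (Fin b → F) :=
  fun i j => u ⟨(i.val + j.val) % k, Nat.mod_lt _ i.pos⟩

/-- The b-symbol distance between `u` and `v`. -/
def dB (F : Type*) [DecidableEq F] (k b : ℕ) (u v : Fin k → F) : ℕ :=
  hammingDist (piB F k b u) (piB F k b v)

/-- The b-symbol weight of `u`: the number of nonzero cyclic windows of length `b`. -/
def wB (F : Type*) [DecidableEq F] [Zero F] (k b : ℕ) (u : Fin k → F) : ℕ :=
  (Finset.univ.filter (fun i : Fin k => piB F k b u i ≠ 0)).card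

/-!
Double count `S = ∑_{u,v} d_b(p_u, p_v)`. From above: each of the `r` coordinates of the
`b`-symbol read vectors is a map into `F^b`, and by Cauchy–Schwarz over its fibres at most a
fraction `1 - q^{-b}` of all ordered pairs disagree there, so `q^b S ≤ r q^{2k} (q^b - 1)`.
From below: the hypothesis bounds `S` by `∑_{f u ≠ f v} (2t - b + 2 - w_b(u - v))`, which is
`q^k` times a sum over `w ∉ ker f`. Each cyclic window is a surjective linear map onto `F^b`,
so the total `b`-symbol weight of `F^k` is `k (q^k - q^{k-b})`, and `|ker f| = q^{k-l}`.
-/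

section PairCounting

variable {α β ι : Type*} [Fintype α] [Fintype β] [DecidableEq β]

theorem card_mul_sum_card_filter_ne_le (h : α → β) :
    (Fintype.card β : ℝ) * ∑ u, (#{v | h u ≠ h v} : ℝ) ≤
      Fintype.card α ^ 2 * (Fintype.card β - 1) := by
  set N : β → ℝ := fun c => #{v | h v = c}
  have hN : ∑ c, N c = Fintype.card α := by
    simp only [N]
    exact_mod_cast (card_eq_sum_card_fiberwise fun x _ => mem_univ (h x)).symm
  have hne (u : α) : (#{v | h u ≠ h v} : ℝ) = Fintype.card α - N (h u) := by
    have hsplit := card_filter_add_card_filter_not (s := univ) (fun v => h v = h u)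
    rw [card_univ] at hsplit
    simp only [N, ne_comm (a := h u), eq_sub_iff_add_eq]
    exact_mod_cast (add_comm _ _).trans hsplit
  have hpairs : ∑ u, N (h u) = ∑ c, N c ^ 2 := by
    rw [← sum_fiberwise' univ h N]
    simp [N, sq]
  have hCS : (Fintype.card α : ℝ) ^ 2 ≤ Fintype.card β * ∑ c, N c ^ 2 := by
    simpa [hN] using sq_sum_le_card_mul_sum_sq (s := univ) (f := N)
  simp only [hne, sum_sub_distrib, hpairs, sum_const, card_univ, nsmul_eq_mul]
  linear_combination hCS

theorem card_mul_sum_sum_hammingDist_le [Fintype ι] (g : α → ι → β) :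
    (Fintype.card β : ℝ) * ∑ u, ∑ v, (hammingDist (g u) (g v) : ℝ) ≤
      Fintype.card ι * Fintype.card α ^ 2 * (Fintype.card β - 1) := by
  have hswap : ∑ u, ∑ v, (hammingDist (g u) (g v) : ℝ) =
      ∑ i, ∑ u, (#{v | g u i ≠ g v i} : ℝ) := by
    simp only [hammingDist, card_filter, Nat.cast_sum]
    exact (sum_congr rfl fun _ _ => sum_comm).trans sum_comm
  rw [hswap, mul_sum]
  refine (sum_le_sum fun i _ => card_mul_sum_card_filter_ne_le (g · i)).trans ?_
  simp [mul_assoc]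

end PairCounting

theorem card_filter_eq_zero_mul_card {G H Φ : Type*} [AddGroup G] [AddGroup H] [Fintype G]
    [Fintype H] [DecidableEq H] [FunLike Φ G H] [AddMonoidHomClass Φ G H] (g : Φ)
    (hg : Function.Surjective g) :
    #{x | g x = 0} * Fintype.card H = Fintype.card G := by
  have := (g : G →+ H).ker.card_mul_index
  rw [AddSubgroup.index_ker, AddMonoidHom.range_eq_top.2 hg, AddSubgroup.card_top] at this
  simpa [Nat.card_eq_fintype_card, Fintype.card_subtype] using this

theorem Fintype.sum_sum_sub {G M : Type*} [AddGroup G] [Fintype G] [AddCommMonoid M]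
    (φ : G → M) : ∑ u : G, ∑ v : G, φ (u - v) = Fintype.card G • ∑ w, φ w := by
  rw [← card_univ, ← sum_const]
  exact Finset.sum_congr rfl fun u _ => (Equiv.subLeft u).sum_comp φ

def windowHom (F : Type*) [AddGroup F] (k b : ℕ) (i : Fin k) : (Fin k → F) →+ (Fin b → F) :=
  AddMonoidHom.mk' (fun u => piB F k b u i) fun _ _ => rfl

@[simp]
theorem windowHom_apply (F : Type*) [AddGroup F] (k b : ℕ) (i : Fin k) (u : Fin k → F) :
    windowHom F k b i u = piB F k b u i :=
  rfl

theorem windowHom_surjective (F : Type*) [AddGroup F] {k b : ℕ} (hbk : b ≤ k) (i : Fin k) :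
    Function.Surjective (windowHom F k b i) := by
  have : NeZero k := ⟨i.pos.ne'⟩
  -- `piB F k b u i` is definitionally `u ∘ (i + Fin.castLE hbk ·)`.
  exact ((add_right_injective i).comp (Fin.castLE_injective hbk)).surjective_comp_right

section BSymbol

variable {F : Type*} [DecidableEq F] {k b : ℕ}

theorem card_pow_mul_sum_sum_dB_le [Fintype F] {α : Type*} [Fintype α] {r : ℕ}
    (p : α → Fin r → F) :
    (Fintype.card F : ℝ) ^ b * ∑ u, ∑ v, (dB F r b (p u) (p v) : ℝ) ≤
      r * Fintype.card α ^ 2 * ((Fintype.card F : ℝ) ^ b - 1) := by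
  simpa [dB] using card_mul_sum_sum_hammingDist_le fun u => piB F r b (p u)

variable [AddCommGroup F]

theorem dB_eq_wB_sub (u v : Fin k → F) : dB F k b u v = wB F k b (u - v) := by
  rw [dB, hammingDist_comm, hammingDist_eq_hammingNorm, neg_add_eq_sub]
  rfl

variable [Fintype F]

theorem sum_wB (hbk : b ≤ k) :
    ∑ u : Fin k → F, (wB F k b u : ℝ) =
      k * ((Fintype.card F : ℝ) ^ k - (Fintype.card F : ℝ) ^ k / (Fintype.card F : ℝ) ^ b) := by
  have hzero (i : Fin k) :
      #{u : Fin k → F | piB F k b u i = 0} * Fintype.card F ^ b = Fintype.card F ^ k := by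
    have h := card_filter_eq_zero_mul_card (windowHom F k b i) (windowHom_surjective F hbk i)
    simp only [windowHom_apply, Fintype.card_fun, Fintype.card_fin] at h
    exact h
  have hne (i : Fin k) : (#{u : Fin k → F | piB F k b u i ≠ 0} : ℝ) =
      (Fintype.card F : ℝ) ^ k - (Fintype.card F : ℝ) ^ k / (Fintype.card F : ℝ) ^ b := by
    have hsplit := card_filter_add_card_filter_not (s := univ) fun u : Fin k → F =>
      piB F k b u i = 0
    rw [card_univ, Fintype.card_fun, Fintype.card_fin] at hsplit
    have hZ : (#{u : Fin k → F | piB F k b u i = 0} : ℝ) =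
        (Fintype.card F : ℝ) ^ k / (Fintype.card F : ℝ) ^ b :=
      eq_div_of_mul_eq (by positivity) (by exact_mod_cast hzero i)
    rw [← hZ, eq_sub_iff_add_eq']
    exact_mod_cast hsplit
  calc ∑ u : Fin k → F, (wB F k b u : ℝ) = ∑ i, (#{u : Fin k → F | piB F k b u i ≠ 0} : ℝ) := by
        simp only [wB, card_filter, Nat.cast_sum]
        exact sum_comm
    _ = _ := by simp [hne, mul_sub]

theorem sum_filter_ne_zero_sub_wB {W : Type*} [Zero W] [DecidableEq W] (f : (Fin k → F) → W)
    (c : ℝ) (hbk : b ≤ k) :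
    ∑ w ∈ univ.filter (fun w => f w ≠ 0), (c - wB F k b w) =
      c * ((Fintype.card F : ℝ) ^ k - #{w | f w = 0}) -
        (k * ((Fintype.card F : ℝ) ^ k - (Fintype.card F : ℝ) ^ k / (Fintype.card F : ℝ) ^ b) -
          ∑ w ∈ univ.filter (fun w => f w = 0), (wB F k b w : ℝ)) := by
  have hsplit := sum_filter_add_sum_filter_not univ (fun w => f w = 0) fun w =>
    c - (wB F k b w : ℝ)
  simp only [sum_sub_distrib, sum_const, card_univ, Fintype.card_fun, Fintype.card_fin,
    sum_wB hbk, nsmul_eq_mul, ne_eq] at hsplit ⊢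
  push_cast at hsplit
  linear_combination hsplit

theorem card_pow_mul_sum_le_sum_sum_dB {W Φ : Type*} [AddGroup W] [DecidableEq W]
    [FunLike Φ (Fin k → F) W] [AddMonoidHomClass Φ (Fin k → F) W] (f : Φ) (c : ℝ) {r : ℕ}
    (p : (Fin k → F) → Fin r → F)
    (hp : ∀ u v, f u ≠ f v → c - dB F k b u v ≤ dB F r b (p u) (p v)) :
    (Fintype.card F : ℝ) ^ k * ∑ w ∈ univ.filter (fun w => f w ≠ 0), (c - wB F k b w) ≤
      ∑ u, ∑ v, (dB F r b (p u) (p v) : ℝ) := by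
  calc (Fintype.card F : ℝ) ^ k * ∑ w ∈ univ.filter (fun w => f w ≠ 0), (c - wB F k b w)
      = ∑ u, ∑ v, if f (u - v) ≠ 0 then c - wB F k b (u - v) else 0 := by
        rw [Fintype.sum_sum_sub (fun w => if f w ≠ 0 then c - wB F k b w else 0), sum_filter]
        simp
    _ ≤ _ := by
        refine sum_le_sum fun u _ => sum_le_sum fun v _ => ?_
        simp only [map_sub, sub_ne_zero, ← dB_eq_wB_sub]
        split_ifs with huv
        · exact hp u v huv
        · positivity

end BSymbol

theorem plotkin_bound_of_double_count {n Q K L c k s S r : ℝ} (hn : 0 < n) (hQ : 1 < Q)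
    (hK : K * L = n) (hlower : n * (c * (n - K) - (k * (n - n / Q) - s)) ≤ S)
    (hupper : Q * S ≤ r * n ^ 2 * (Q - 1)) :
    Q / (Q - 1) * c * (1 - L⁻¹) - k + Q / (Q - 1) * (s / n) ≤ r := by
  have hQ1 : 0 < Q - 1 := sub_pos.2 hQ
  have hK0 : K ≠ 0 := left_ne_zero_of_mul (hK ▸ hn.ne')
  have hL0 : L ≠ 0 := right_ne_zero_of_mul (hK ▸ hn.ne')
  calc _ = Q * (n * (c * (n - K) - (k * (n - n / Q) - s))) / (n ^ 2 * (Q - 1)) := by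
        rw [← hK]
        field_simp
        ring
    _ ≤ Q * S / (n ^ 2 * (Q - 1)) := by gcongr
    _ ≤ r := by rwa [div_le_iff₀ (by positivity), ← mul_assoc]

theorem plotkin_bound_FCBSC_linear_general (F : Type*) [Field F] [Fintype F] [DecidableEq F]
    (q k l r b t : ℕ) (hq : Fintype.card F = q) (hb : 1 ≤ b) (hbk : b ≤ k)
    (f : (Fin k → F) →ₗ[F] (Fin l → F)) (hf : Function.Surjective f)
    (p : (Fin k → F) → (Fin r → F))
    (hp : ∀ u v : Fin k → F, f u ≠ f v →
      (dB F r b (p u) (p v) : ℤ) ≥ max (2 * (t : ℤ) - b + 2 - dB F k b u v) 0) :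
    (r : ℝ) ≥ ((q : ℝ) ^ b / ((q : ℝ) ^ b - 1)) * (2 * (t : ℝ) - b + 2) * (1 - ((q : ℝ) ^ l)⁻¹)
      - k + ((q : ℝ) ^ b / ((q : ℝ) ^ b - 1)) *
        ((∑ u ∈ Finset.univ.filter (fun u : Fin k → F => f u = 0), (wB F k b u : ℝ)) / (q : ℝ) ^ k) := by
  subst hq
  have hK : ((#{u | f u = 0} : ℕ) : ℝ) * (Fintype.card F : ℝ) ^ l = (Fintype.card F : ℝ) ^ k := by
    simpa using congrArg (Nat.cast (R := ℝ)) (card_filter_eq_zero_mul_card f hf)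
  have hlower := card_pow_mul_sum_le_sum_sum_dB f (2 * t - b + 2) p fun u v huv => by
    exact_mod_cast (le_max_left _ _).trans (hp u v huv)
  rw [sum_filter_ne_zero_sub_wB f _ hbk] at hlower
  have hupper := card_pow_mul_sum_sum_dB_le (b := b) p
  simp only [Fintype.card_fun, Fintype.card_fin, Nat.cast_pow] at hupper
  exact plotkin_bound_of_double_count (by positivity)
    (one_lt_pow₀ (by exact_mod_cast Fintype.one_lt_card) (by omega)) hK hlower hupper

theorem plotkin_bound_FCBSC_linear (F : Type*) [Field F] [Fintype F] [DecidableEq F]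
    (q k l r b t : ℕ) (hq : Fintype.card F = q) (hb : 1 ≤ b) (hbk : b ≤ k) (ht : 1 ≤ t)
    (f : (Fin k → F) →ₗ[F] (Fin l → F)) (hf : Function.Surjective f)
    (p : (Fin k → F) → (Fin r → F))
    (hp : ∀ u v : Fin k → F, f u ≠ f v →
      (dB F r b (p u) (p v) : ℤ) ≥ max (2 * (t : ℤ) - b + 2 - dB F k b u v) 0) :
    (r : ℝ) ≥ ((q : ℝ) ^ b / ((q : ℝ) ^ b - 1)) * (2 * (t : ℝ) - b + 2) * (1 - ((q : ℝ) ^ l)⁻¹)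
      - k + ((q : ℝ) ^ b / ((q : ℝ) ^ b - 1)) *
        ((∑ u ∈ Finset.univ.filter (fun u : Fin k → F => f u = 0), (wB F k b u : ℝ)) / (q : ℝ) ^ k) :=
  plotkin_bound_FCBSC_linear_general F q k l r b t hq hb hbk f hf p hp
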